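/- Improved reduction bound: Let (A,T) be an abstract space with skeleton Γ and V ∈ D^ᾱ(T;Γ), and suppose there exist β* ∈ A and constants M*^b, M^b ≥ 0 such that |V(x).v| ≤ M*^b N^{⟨β*⟩}‖Γ_{β*}(x)v‖_{T_{β*}} + M^b Σ_{β∈A, β≠β*} N^{⟨β⟩}‖Γ_β(x)v‖_{T_β} for all x ∈ ℝ² and v ∈ T. Then for every η with β* < η and β̲ < η ≤ β̄: [C_ηV]_{D^{ᾱ∧η}(T;Γ)} ≤ [V]_{D^ᾱ(T;Γ)} + (|A|−1) N^{m(η)} ‖Γ‖_sk M^b, where m(η) := min{⟨β⟩ : β ∈ A, β ≥ η}. -/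

import Mathlib

open scoped BigOperators
open MeasureTheory

noncomputable section

/-- The parabolic metric `d(x,y) = |x₁−y₁| + √|x₂−y₂|` on `ℝ²`. -/
def pdist (x y : ℝ × ℝ) : ℝ := |x.1 - y.1| + Real.sqrt |x.2 - y.2|

/-- The kernel `ψ_T`, the inverse Fourier transform of `exp(−T(k₁⁴+k₂²))`. -/
def psiK (T : ℝ) (x : ℝ × ℝ) : ℝ :=
  ∫ k : ℝ × ℝ, Real.exp (-(T * (k.1 ^ 4 + k.2 ^ 2))) *
    Real.cos (2 * Real.pi * (k.1 * x.1 + k.2 * x.2))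

/-- Mollification at scale `t` by convolution with `ψ_t`. -/
def mollify {E : Type*} [NormedAddCommGroup E] [NormedSpace ℝ E]
    (t : ℝ) (g : ℝ × ℝ → E) (x : ℝ × ℝ) : E :=
  ∫ y : ℝ × ℝ, psiK t (x - y) • g y

/-- A (vector valued) tempered distribution represented through its semigroup
mollifications `g_T`, with the semigroup property `(g_T)_t = g_{T+t}`. -/
structure MollDistrib (E : Type*) [NormedAddCommGroup E] [NormedSpace ℝ E] where
  app : ℝ → ℝ × ℝ → E
  cont : ∀ T : ℝ, 0 < T → Continuous (app T)
  semigroup : ∀ T : ℝ, 0 < T → ∀ t : ℝ, 0 < t → app (T + t) = mollify t (app T)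

/-- The data of a skeleton on the abstract space `(A, T = ⊕_{β∈A} T_β)`:
a triangular, strongly continuous family of operators. -/
structure PreSkeleton (A : Finset ℝ) (Tb : A → Type*)
    [∀ β, NormedAddCommGroup (Tb β)] [∀ β, NormedSpace ℝ (Tb β)] where
  mat : ℝ × ℝ → ∀ β γ : A, Tb γ →L[ℝ] Tb β
  cont : ∀ (β γ : A) (v : Tb γ), Continuous fun x => mat x β γ v
  diag : ∀ (x : ℝ × ℝ) (β : A), mat x β β = ContinuousLinearMap.id ℝ (Tb β)
  upper : ∀ (x : ℝ × ℝ) (β γ : A), (β : ℝ) < (γ : ℝ) → mat x β γ = 0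

namespace PreSkeleton

variable {A : Finset ℝ} {Tb : A → Type*}
  [∀ β, NormedAddCommGroup (Tb β)] [∀ β, NormedSpace ℝ (Tb β)]

/-- `Γ_β(x)v = v_β + ∑_{γ<β} Γ_β^γ(x) v_γ`. -/
def apply (S : PreSkeleton A Tb) (x : ℝ × ℝ) (β : A) (v : ∀ γ : A, Tb γ) : Tb β :=
  ∑ γ : A, S.mat x β γ (v γ)

/-- The continuity property (ssss2) of a skeleton, with constant `C`. -/
def IsSkelBound (S : PreSkeleton A Tb) (C : ℝ) : Prop :=
  ∀ (β : A) (v : ∀ γ : A, Tb γ) (x y : ℝ × ℝ), pdist y x ≤ 1 →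
    ‖S.apply y β v - S.apply x β v‖ ≤
      C * ∑ γ : A, (if (γ : ℝ) < (β : ℝ)
        then pdist y x ^ ((β : ℝ) - (γ : ℝ)) * ‖S.apply x γ v‖ else 0)

/-- `Γ` is a skeleton: the continuity property holds for some `C ≥ 0`. -/
def IsSkeleton (S : PreSkeleton A Tb) : Prop := ∃ C, 0 ≤ C ∧ S.IsSkelBound C

/-- `‖Γ‖_sk`, the least admissible constant in the continuity property. -/
def skelNorm (S : PreSkeleton A Tb) : ℝ := sInf {C | 0 ≤ C ∧ S.IsSkelBound C}

/-- Form boundedness of `V : ℝ² → T*` with constants `(M_β^b)`. -/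
def FormBounded (S : PreSkeleton A Tb) (V : ℝ × ℝ → (∀ γ : A, Tb γ) → ℝ)
    (Mb : A → ℝ) : Prop :=
  ∀ x v, |V x v| ≤ ∑ β : A, Mb β * ‖S.apply x β v‖

/-- Form continuity of order `ord` with constant `Mc`. -/
def FormContinuous (S : PreSkeleton A Tb) (ord : ℝ)
    (V : ℝ × ℝ → (∀ γ : A, Tb γ) → ℝ) (Mc : ℝ) : Prop :=
  ∀ x y v, pdist y x ≤ 1 →
    |V y v - V x v| ≤
      Mc * ∑ β : A, pdist y x ^ max (ord - (β : ℝ)) 0 * ‖S.apply x β v‖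

/-- `V` is a modelled distribution of order `ord` relative to the skeleton `S`. -/
def IsModelled (S : PreSkeleton A Tb) (ord : ℝ)
    (V : ℝ × ℝ → (∀ γ : A, Tb γ) → ℝ) : Prop :=
  (∀ x, IsLinearMap ℝ (V x)) ∧ (∀ v, Continuous fun x => V x v) ∧
    (∃ Mb : A → ℝ, (∀ β, 0 ≤ Mb β) ∧ S.FormBounded V Mb) ∧
    (∃ Mc : ℝ, 0 ≤ Mc ∧ S.FormContinuous ord V Mc)

/-- The seminorm `[V]_{D^{ord}(T;Γ)}`: least form-continuity constant. -/
def ctyNorm (S : PreSkeleton A Tb) (ord : ℝ)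
    (V : ℝ × ℝ → (∀ γ : A, Tb γ) → ℝ) : ℝ :=
  sInf {Mc | 0 ≤ Mc ∧ S.FormContinuous ord V Mc}

/-- The norm `‖V‖_{T;Γ}`: least `M` such that the constants `M·N^{⟨β⟩}` are
admissible for form boundedness. -/
def bdNorm (S : PreSkeleton A Tb) (N : ℝ) (exps : A → ℝ)
    (V : ℝ × ℝ → (∀ γ : A, Tb γ) → ℝ) : ℝ :=
  sInf {M | 0 ≤ M ∧ S.FormBounded V fun β => M * N ^ exps β}

/-- One step `(id − Γ_b)` of the reduction procedure. -/
def cutStep (S : PreSkeleton A Tb) (x : ℝ × ℝ) (b : ℝ)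
    (v : ∀ γ : A, Tb γ) : ∀ γ : A, Tb γ :=
  fun γ => v γ - if (γ : ℝ) = b then S.apply x γ v else 0

/-- The reduction of a vector: all levels `≥ η` are cut, in increasing order. -/
def cutVec (S : PreSkeleton A Tb) (x : ℝ × ℝ) (η : ℝ)
    (v : ∀ γ : A, Tb γ) : ∀ γ : A, Tb γ :=
  ((A.filter fun b => η ≤ b).sort (· ≤ ·)).foldl (fun w b => S.cutStep x b w) v

/-- The reduction `C_η V` of a modelled distribution. -/
def cutForm (S : PreSkeleton A Tb) (η : ℝ)
    (V : ℝ × ℝ → (∀ γ : A, Tb γ) → ℝ) : ℝ × ℝ → (∀ γ : A, Tb γ) → ℝ :=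
  fun x v => V x (S.cutVec x η v)

end PreSkeleton

/-- `m(η) = min{⟨β⟩ : β ∈ A, β ≥ η}`. -/
def minExpFrom (A : Finset ℝ) (exps : A → ℝ) (η : ℝ) : ℝ :=
  sInf {r | ∃ β : A, η ≤ (β : ℝ) ∧ r = exps β}

/-!
With `w_z` the reduction of `v` at the base point `z`, split
`C_ηV(y).v − C_ηV(x).v = (V(y) − V(x)).w_x + V(y).(w_y − w_x)`.
Since `Γ_β(z) w_z` vanishes for `β ≥ η` and equals `Γ_β(z) v` for `β < η`, the first term is
controlled by `[V]` at the lower order `ᾱ ∧ η`. In the second, `Γ_β(y)(w_y − w_x)` vanishes for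
`β < η`, in particular for `β*`, and equals `(Γ_β(x) − Γ_β(y)) w_x` for `β ≥ η`, which the
skeleton bound controls. Hence only the `|A| − 1` constants `M^b N^{⟨β⟩}` with `β ≠ β*` enter,
each with `N^{⟨β⟩} ≤ N^{m(η)}`.
-/

lemma Finset.sum_ite_ne_const {ι M : Type*} [Fintype ι] [DecidableEq ι] [AddCommMonoid M]
    (j : ι) (c : M) : ∑ i, (if i ≠ j then c else 0) = (Fintype.card ι - 1) • c := by
  rw [Finset.sum_ite, Finset.sum_const_zero, add_zero, Finset.sum_const, Finset.filter_ne',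
    Finset.card_erase_of_mem (Finset.mem_univ j), Finset.card_univ]

open scoped Pointwise in
lemma csInf_le_csInf_add_mul {P Q R : Set ℝ} (hP : P.Nonempty) (hQ : Q.Nonempty)
    (hR : BddBelow R) {K : ℝ} (hK : 0 ≤ K) (h : ∀ p ∈ P, ∀ q ∈ Q, p + K * q ∈ R) :
    sInf R ≤ sInf P + K * sInf Q := by
  have hP' : ∀ q ∈ Q, sInf R - K * q ≤ sInf P := fun q hq =>
    le_csInf hP fun p hp => by linarith [csInf_le hR (h p hp q hq)]
  have hQ' : sInf R - sInf P ≤ sInf (K • Q) :=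
    le_csInf hQ.smul_set (by rintro _ ⟨q, hq, rfl⟩; linarith [hP' q hq, smul_eq_mul K q])
  rw [Real.sInf_smul_of_nonneg hK, smul_eq_mul] at hQ'
  linarith

lemma pdist_nonneg (x y : ℝ × ℝ) : 0 ≤ pdist x y :=
  add_nonneg (abs_nonneg _) (Real.sqrt_nonneg _)

lemma minExpFrom_le {A : Finset ℝ} (exps : A → ℝ) {η : ℝ} {β : A} (hβ : η ≤ (β : ℝ)) :
    minExpFrom A exps η ≤ exps β := by
  refine csInf_le ((Set.finite_range exps).subset ?_).bddBelow ⟨β, hβ, rfl⟩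
  rintro _ ⟨β', -, rfl⟩
  exact Set.mem_range_self β'

namespace PreSkeleton

variable {A : Finset ℝ} {Tb : A → Type*}
  [∀ β, NormedAddCommGroup (Tb β)] [∀ β, NormedSpace ℝ (Tb β)]
  (S : PreSkeleton A Tb)

lemma apply_sub (x : ℝ × ℝ) (β : A) (v w : ∀ γ : A, Tb γ) :
    S.apply x β (v - w) = S.apply x β v - S.apply x β w := by
  simp only [apply, Pi.sub_apply, map_sub, Finset.sum_sub_distrib]

lemma apply_congr_of_le (x : ℝ × ℝ) {β : A} {v w : ∀ γ : A, Tb γ}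
    (h : ∀ γ : A, (γ : ℝ) ≤ β → v γ = w γ) : S.apply x β v = S.apply x β w := by
  refine Finset.sum_congr rfl fun γ _ => ?_
  rcases le_or_gt (γ : ℝ) β with hγ | hγ
  · rw [h γ hγ]
  · simp [S.upper x β γ hγ]

lemma cutStep_apply_of_ne (x : ℝ × ℝ) {b : ℝ} (w : ∀ γ : A, Tb γ) {γ : A} (hγ : (γ : ℝ) ≠ b) :
    S.cutStep x b w γ = w γ := by
  simp [cutStep, hγ]

lemma apply_cutStep_self (x : ℝ × ℝ) (β : A) (w : ∀ γ : A, Tb γ) :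
    S.apply x β (S.cutStep x β w) = 0 := by
  have hsingle : ∑ γ : A, S.mat x β γ (if (γ : ℝ) = β then S.apply x γ w else 0) =
      S.apply x β w := by
    rw [Finset.sum_eq_single_of_mem β (Finset.mem_univ β) fun γ _ hγ => by
      rw [if_neg (Subtype.coe_ne_coe.mpr hγ), map_zero]]
    simp [S.diag]
  simp only [apply, cutStep, map_sub, Finset.sum_sub_distrib] at hsingle ⊢
  rw [hsingle, sub_self]

lemma foldl_cutStep_apply_of_forall_ne (x : ℝ × ℝ) {γ : A} :
    ∀ (L : List ℝ) (w : ∀ δ : A, Tb δ), (∀ b ∈ L, (γ : ℝ) ≠ b) →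
      L.foldl (fun w b => S.cutStep x b w) w γ = w γ
  | [], _, _ => rfl
  | b :: L, w, h => by
    rw [List.foldl_cons, foldl_cutStep_apply_of_forall_ne x L _ fun b' hb' =>
      h b' (List.mem_cons_of_mem _ hb'), S.cutStep_apply_of_ne x w (h b List.mem_cons_self)]

lemma apply_foldl_cutStep_of_forall_lt (x : ℝ × ℝ) {β : A} (L : List ℝ) (w : ∀ δ : A, Tb δ)
    (h : ∀ b ∈ L, (β : ℝ) < b) :
    S.apply x β (L.foldl (fun w b => S.cutStep x b w) w) = S.apply x β w :=
  S.apply_congr_of_le x fun _ hγ =>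
    S.foldl_cutStep_apply_of_forall_ne x L w fun b hb => (hγ.trans_lt (h b hb)).ne

lemma apply_foldl_cutStep_of_mem (x : ℝ × ℝ) {β : A} :
    ∀ (L : List ℝ) (w : ∀ δ : A, Tb δ), L.Pairwise (· < ·) → (β : ℝ) ∈ L →
      S.apply x β (L.foldl (fun w b => S.cutStep x b w) w) = 0
  | b :: L, w, hL, hβ => by
    rw [List.pairwise_cons] at hL
    rw [List.foldl_cons]
    rcases List.mem_cons.mp hβ with rfl | hβ
    · rw [S.apply_foldl_cutStep_of_forall_lt x L _ hL.1, S.apply_cutStep_self]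
    · exact apply_foldl_cutStep_of_mem x L _ hL.2 hβ

lemma cutVec_apply_of_lt (x : ℝ × ℝ) {η : ℝ} (v : ∀ γ : A, Tb γ) {γ : A} (hγ : (γ : ℝ) < η) :
    S.cutVec x η v γ = v γ :=
  S.foldl_cutStep_apply_of_forall_ne x _ v fun _ hb =>
    (hγ.trans_le (Finset.mem_filter.mp ((Finset.mem_sort _).mp hb)).2).ne

lemma apply_cutVec_of_lt (x z : ℝ × ℝ) {η : ℝ} (v : ∀ γ : A, Tb γ) {β : A} (hβ : (β : ℝ) < η) :
    S.apply z β (S.cutVec x η v) = S.apply z β v :=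
  S.apply_congr_of_le z fun _ hγ => S.cutVec_apply_of_lt x v (hγ.trans_lt hβ)

lemma apply_cutVec_of_le (x : ℝ × ℝ) {η : ℝ} (v : ∀ γ : A, Tb γ) {β : A} (hβ : η ≤ (β : ℝ)) :
    S.apply x β (S.cutVec x η v) = 0 :=
  S.apply_foldl_cutStep_of_mem x _ v (Finset.sortedLT_sort _).pairwise
    ((Finset.mem_sort _).mpr (Finset.mem_filter.mpr ⟨β.2, hβ⟩))

lemma apply_cutVec_sub_of_lt (x y : ℝ × ℝ) {η : ℝ} (v : ∀ γ : A, Tb γ) {β : A}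
    (hβ : (β : ℝ) < η) : S.apply y β (S.cutVec y η v - S.cutVec x η v) = 0 := by
  rw [S.apply_sub, S.apply_cutVec_of_lt y y v hβ, S.apply_cutVec_of_lt x y v hβ, sub_self]

/-- `S.FormContinuous ord V Mc` says `|V y v - V x v| ≤ Mc * S.contWeight ord x y v`. -/
def contWeight (ord : ℝ) (x y : ℝ × ℝ) (v : ∀ γ : A, Tb γ) : ℝ :=
  ∑ β : A, pdist y x ^ max (ord - β) 0 * ‖S.apply x β v‖

lemma contWeight_nonneg (ord : ℝ) (x y : ℝ × ℝ) (v : ∀ γ : A, Tb γ) :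
    0 ≤ S.contWeight ord x y v :=
  Finset.sum_nonneg fun _ _ => mul_nonneg (Real.rpow_nonneg (pdist_nonneg y x) _) (norm_nonneg _)

lemma contWeight_cutVec_le {x y : ℝ × ℝ} (hxy : pdist y x ≤ 1) (ord η : ℝ)
    (v : ∀ γ : A, Tb γ) :
    S.contWeight ord x y (S.cutVec x η v) ≤ S.contWeight (min ord η) x y v := by
  refine Finset.sum_le_sum fun β _ => ?_
  rcases le_or_gt η β with hβ | hβ
  · rw [S.apply_cutVec_of_le x v hβ, norm_zero, mul_zero]
    exact mul_nonneg (Real.rpow_nonneg (pdist_nonneg y x) _) (norm_nonneg _)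
  · rw [S.apply_cutVec_of_lt x x v hβ]
    exact mul_le_mul_of_nonneg_right (Real.rpow_le_rpow_of_exponent_ge' (pdist_nonneg y x) hxy
      (le_max_right _ _) (max_le_max (by linarith [min_le_left ord η]) le_rfl)) (norm_nonneg _)

lemma norm_apply_cutVec_sub_le {C : ℝ} (hC0 : 0 ≤ C) (hC : S.IsSkelBound C) {x y : ℝ × ℝ}
    (hxy : pdist y x ≤ 1) (ord : ℝ) {η : ℝ} (v : ∀ γ : A, Tb γ) {β : A} (hβ : η ≤ (β : ℝ)) :
    ‖S.apply y β (S.cutVec y η v - S.cutVec x η v)‖ ≤ C * S.contWeight (min ord η) x y v := by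
  have hshift : S.apply y β (S.cutVec y η v - S.cutVec x η v) =
      -(S.apply y β (S.cutVec x η v) - S.apply x β (S.cutVec x η v)) := by
    rw [S.apply_sub, S.apply_cutVec_of_le y v hβ, S.apply_cutVec_of_le x v hβ]
    abel
  rw [hshift, norm_neg]
  refine (hC β _ x y hxy).trans (mul_le_mul_of_nonneg_left (Finset.sum_le_sum fun γ _ => ?_) hC0)
  have hterm : 0 ≤ pdist y x ^ max (min ord η - γ) 0 * ‖S.apply x γ v‖ :=
    mul_nonneg (Real.rpow_nonneg (pdist_nonneg y x) _) (norm_nonneg _)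
  split_ifs with hγβ
  · rcases le_or_gt η γ with hγ | hγ
    · rw [S.apply_cutVec_of_le x v hγ, norm_zero, mul_zero]
      exact hterm
    · rw [S.apply_cutVec_of_lt x x v hγ]
      exact mul_le_mul_of_nonneg_right (Real.rpow_le_rpow_of_exponent_ge' (pdist_nonneg y x) hxy
        (le_max_right _ _) (max_le (by linarith [min_le_right ord η]) (by linarith)))
        (norm_nonneg _)
  · exact hterm

lemma rpow_mul_norm_apply_cutVec_sub_le {N : ℝ} (hN0 : 0 < N) (hN1 : N ≤ 1) (exps : A → ℝ)
    {C : ℝ} (hC0 : 0 ≤ C) (hC : S.IsSkelBound C) {x y : ℝ × ℝ} (hxy : pdist y x ≤ 1)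
    (ord η : ℝ) (v : ∀ γ : A, Tb γ) (β : A) :
    N ^ exps β * ‖S.apply y β (S.cutVec y η v - S.cutVec x η v)‖ ≤
      N ^ minExpFrom A exps η * (C * S.contWeight (min ord η) x y v) := by
  rcases lt_or_ge (β : ℝ) η with hβ | hβ
  · rw [S.apply_cutVec_sub_of_lt x y v hβ, norm_zero, mul_zero]
    exact mul_nonneg (Real.rpow_nonneg hN0.le _) (mul_nonneg hC0 (S.contWeight_nonneg _ x y v))
  · exact mul_le_mul (Real.rpow_le_rpow_of_exponent_ge hN0 hN1 (minExpFrom_le exps hβ))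
      (S.norm_apply_cutVec_sub_le hC0 hC hxy ord v hβ) (norm_nonneg _) (Real.rpow_nonneg hN0.le _)

lemma abs_apply_cutVec_sub_le {N : ℝ} (hN0 : 0 < N) (hN1 : N ≤ 1) (exps : A → ℝ)
    {V : (∀ γ : A, Tb γ) → ℝ} {z : ℝ × ℝ} {βstar : A} {Mstar Mb : ℝ} (hMb : 0 ≤ Mb)
    (hbd : ∀ v : ∀ γ : A, Tb γ,
      |V v| ≤ Mstar * N ^ exps βstar * ‖S.apply z βstar v‖ +
        Mb * ∑ β : A, (if β ≠ βstar then N ^ exps β * ‖S.apply z β v‖ else 0))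
    {C : ℝ} (hC0 : 0 ≤ C) (hC : S.IsSkelBound C) {x : ℝ × ℝ} (hxz : pdist z x ≤ 1)
    (ord : ℝ) {η : ℝ} (hηstar : (βstar : ℝ) < η) (v : ∀ γ : A, Tb γ) :
    |V (S.cutVec z η v - S.cutVec x η v)| ≤
      ((A.card - 1 : ℕ) : ℝ) * N ^ minExpFrom A exps η * C * Mb *
        S.contWeight (min ord η) x z v := by
  set u := S.cutVec z η v - S.cutVec x η v
  have hstar : S.apply z βstar u = 0 := S.apply_cutVec_sub_of_lt x z v hηstar
  calc |V u|
      ≤ Mb * ∑ β : A, (if β ≠ βstar then N ^ exps β * ‖S.apply z β u‖ else 0) := by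
        simpa only [hstar, norm_zero, mul_zero, zero_add] using hbd u
    _ ≤ Mb * ∑ β : A, (if β ≠ βstar then
          N ^ minExpFrom A exps η * (C * S.contWeight (min ord η) x z v) else 0) := by
        gcongr with β
        split_ifs
        · exact S.rpow_mul_norm_apply_cutVec_sub_le hN0 hN1 exps hC0 hC hxz ord η v β
        · exact le_rfl
    _ = _ := by
        rw [Finset.sum_ite_ne_const, Fintype.card_coe, nsmul_eq_mul]
        ring

theorem formContinuous_cutForm {N : ℝ} (hN0 : 0 < N) (hN1 : N ≤ 1) (exps : A → ℝ)
    {ord : ℝ} {V : ℝ × ℝ → (∀ γ : A, Tb γ) → ℝ} (hlin : ∀ x, IsLinearMap ℝ (V x))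
    {βstar : A} {Mstar Mb : ℝ} (hMb : 0 ≤ Mb)
    (hbd : ∀ (x : ℝ × ℝ) (v : ∀ γ : A, Tb γ),
      |V x v| ≤ Mstar * N ^ exps βstar * ‖S.apply x βstar v‖ +
        Mb * ∑ β : A, (if β ≠ βstar then N ^ exps β * ‖S.apply x β v‖ else 0))
    {η : ℝ} (hηstar : (βstar : ℝ) < η)
    {Mc C : ℝ} (hMc0 : 0 ≤ Mc) (hMc : S.FormContinuous ord V Mc)
    (hC0 : 0 ≤ C) (hC : S.IsSkelBound C) :
    S.FormContinuous (min ord η) (S.cutForm η V)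
      (Mc + ((A.card - 1 : ℕ) : ℝ) * N ^ minExpFrom A exps η * C * Mb) := by
  intro x y v hxy
  have hfixed : |V y (S.cutVec x η v) - V x (S.cutVec x η v)| ≤
      Mc * S.contWeight (min ord η) x y v :=
    (hMc x y _ hxy).trans (mul_le_mul_of_nonneg_left (S.contWeight_cutVec_le hxy ord η v) hMc0)
  have hmoved := S.abs_apply_cutVec_sub_le hN0 hN1 exps hMb (hbd y) hC0 hC hxy ord hηstar v
  calc |V y (S.cutVec y η v) - V x (S.cutVec x η v)|
      = |(V y (S.cutVec x η v) - V x (S.cutVec x η v)) +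
          V y (S.cutVec y η v - S.cutVec x η v)| := by
        rw [(hlin y).map_sub]
        congr 1
        ring
    _ ≤ _ := (abs_add_le _ _).trans (add_le_add hfixed hmoved)
    _ = _ := by
        simp only [contWeight]
        ring

end PreSkeleton

theorem improved_reduction_bound_general
    {A : Finset ℝ} {Tb : A → Type*}
    [∀ β, NormedAddCommGroup (Tb β)] [∀ β, NormedSpace ℝ (Tb β)]
    (S : PreSkeleton A Tb) (hS : S.IsSkeleton)
    (N : ℝ) (hN0 : 0 < N) (hN1 : N ≤ 1)
    (exps : A → ℝ)
    (ord : ℝ) (V : ℝ × ℝ → (∀ γ : A, Tb γ) → ℝ) (hV : S.IsModelled ord V)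
    (βstar : A) (Mstar Mb : ℝ) (hMb : 0 ≤ Mb)
    (hbd : ∀ (x : ℝ × ℝ) (v : ∀ γ : A, Tb γ),
      |V x v| ≤ Mstar * N ^ exps βstar * ‖S.apply x βstar v‖ +
        Mb * ∑ β : A,
          (if β ≠ βstar then N ^ exps β * ‖S.apply x β v‖ else 0))
    (η : ℝ) (hηstar : (βstar : ℝ) < η) :
    S.ctyNorm (min ord η) (S.cutForm η V) ≤
      S.ctyNorm ord V +
        ((A.card - 1 : ℕ) : ℝ) * N ^ minExpFrom A exps η * S.skelNorm * Mb := by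
  obtain ⟨hlin, -, -, hVc⟩ := hV
  have hK : 0 ≤ ((A.card - 1 : ℕ) : ℝ) * N ^ minExpFrom A exps η * Mb := by positivity
  calc S.ctyNorm (min ord η) (S.cutForm η V)
      ≤ S.ctyNorm ord V + ((A.card - 1 : ℕ) : ℝ) * N ^ minExpFrom A exps η * Mb * S.skelNorm := by
        refine csInf_le_csInf_add_mul hVc hS ⟨0, fun _ h => h.1⟩ hK
          fun Mc ⟨hMc0, hMc⟩ C ⟨hC0, hC⟩ => ⟨by positivity, ?_⟩
        convert S.formContinuous_cutForm hN0 hN1 exps hlin hMb hbd hηstar hMc0 hMc hC0 hC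
          using 1
        ring
    _ = _ := by ring

/-- **Improved reduction bound.** -/
theorem improved_reduction_bound
    {A : Finset ℝ} {Tb : A → Type*}
    [∀ β, NormedAddCommGroup (Tb β)] [∀ β, NormedSpace ℝ (Tb β)]
    (S : PreSkeleton A Tb) (hS : S.IsSkeleton) (hA : A.Nonempty)
    (N : ℝ) (hN0 : 0 < N) (hN1 : N ≤ 1)
    (exps : A → ℝ) (hexps : ∀ β, 0 ≤ exps β)
    (ord : ℝ) (V : ℝ × ℝ → (∀ γ : A, Tb γ) → ℝ) (hV : S.IsModelled ord V)
    (βstar : A) (Mstar Mb : ℝ) (hMstar : 0 ≤ Mstar) (hMb : 0 ≤ Mb)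
    (hbd : ∀ (x : ℝ × ℝ) (v : ∀ γ : A, Tb γ),
      |V x v| ≤ Mstar * N ^ exps βstar * ‖S.apply x βstar v‖ +
        Mb * ∑ β : A,
          (if β ≠ βstar then N ^ exps β * ‖S.apply x β v‖ else 0))
    (η : ℝ) (hηstar : (βstar : ℝ) < η) (hη₁ : A.min' hA < η) (hη₂ : η ≤ A.max' hA) :
    S.ctyNorm (min ord η) (S.cutForm η V) ≤
      S.ctyNorm ord V +
        ((A.card - 1 : ℕ) : ℝ) * N ^ minExpFrom A exps η * S.skelNorm * Mb :=
  improved_reduction_bound_general S hS N hN0 hN1 exps ord V hV βstar Mstar Mb hMb hbd η hηstar
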